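/- arXiv:1405.3836 — 8 statements merged into one kernel-verified Lean document; each statement's English description precedes it below -/
import Mathlib

section
/- Let T : A → B be a (not necessarily linear nor continuous) 2-local triple homomorphism between C*-algebras. Then {T(a),T(a),T(a)} = T({a,a,a}) for every a ∈ A. Consequently, every linear 2-local triple homomorphism between C*-algebras is a triple homomorphism. -/
/-- The triple product `{x,y,z} = (1/2)(x y* z + z y* x)` on a C*-algebra. -/
noncomputable def tp {A : Type*} [NonUnitalCStarAlgebra A] (x y z : A) : A :=
  (2⁻¹ : ℂ) • (x * star y * z + z * star y * x)

/-- A bounded linear map between C*-algebras is a triple homomorphism if it preserves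
the triple product. -/
def IsTripleHom {A B : Type*} [NonUnitalCStarAlgebra A] [NonUnitalCStarAlgebra B]
    (Φ : A →L[ℂ] B) : Prop :=
  ∀ x y z : A, Φ (tp x y z) = tp (Φ x) (Φ y) (Φ z)

/-- A (not necessarily linear nor continuous) map `T : A → B` is a 2-local triple
homomorphism if for every `a b : A` there is a bounded linear triple homomorphism
`Φ : A →L[ℂ] B` agreeing with `T` at `a` and at `b`. -/
def Is2LocalTripleHom {A B : Type*} [NonUnitalCStarAlgebra A] [NonUnitalCStarAlgebra B]
    (T : A → B) : Prop :=
  ∀ a b : A, ∃ Φ : A →L[ℂ] B, IsTripleHom Φ ∧ Φ a = T a ∧ Φ b = T b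

set_option maxHeartbeats 1600000 in
open Complex in
/-- The polarization identity expressing the triple product via cubes. -/
lemma tp_polarization {A : Type*} [NonUnitalCStarAlgebra A] (x y z : A) :
    (16 : ℂ) • tp x y z =
      tp (x + y + z) (x + y + z) (x + y + z) - tp (x + y - z) (x + y - z) (x + y - z)
      + I • (tp (x + I • y + z) (x + I • y + z) (x + I • y + z)
             - tp (x + I • y - z) (x + I • y - z) (x + I • y - z))
      - (tp (x - y + z) (x - y + z) (x - y + z)
             - tp (x - y - z) (x - y - z) (x - y - z))
      - I • (tp (x - I • y + z) (x - I • y + z) (x - I • y + z)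
             - tp (x - I • y - z) (x - I • y - z) (x - I • y - z)) := by
  simp only [tp, smul_add, star_add, star_sub, star_smul, mul_add, add_mul, mul_sub, sub_mul,
    smul_mul_assoc, mul_smul_comm, RCLike.star_def, Complex.conj_I, smul_smul, smul_sub,
    neg_smul, neg_neg, neg_mul, mul_neg, smul_neg, neg_add_rev, Complex.I_mul_I]
  match_scalars <;> (ring_nf; try simp [Complex.I_sq]; try ring_nf)

/-- A 2-local triple homomorphism preserves cubes; consequently, every linear 2-local
triple homomorphism between C*-algebras is a triple homomorphism. -/
theorem twoLocal_tripleHom_preserves_cubes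
    {A B : Type*} [NonUnitalCStarAlgebra A] [NonUnitalCStarAlgebra B]
    (T : A → B) (hT : Is2LocalTripleHom T) :
    (∀ a : A, tp (T a) (T a) (T a) = T (tp a a a)) ∧
    ((∀ x y : A, T (x + y) = T x + T y) → (∀ (c : ℂ) (x : A), T (c • x) = c • T x) →
      ∀ x y z : A, T (tp x y z) = tp (T x) (T y) (T z)) := by
  have h1 : ∀ a : A, tp (T a) (T a) (T a) = T (tp a a a) := by
    intro a
    obtain ⟨Φ, hΦ, ha, hb⟩ := hT a (tp a a a)
    rw [← ha, ← hb]
    exact (hΦ a a a).symm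
  refine ⟨h1, ?_⟩
  intro hadd hsmul x y z
  have hsub : ∀ u v : A, T (u - v) = T u - T v := by
    intro u v
    rw [sub_eq_add_neg, hadd, ← neg_one_smul ℂ v, hsmul, neg_one_smul, ← sub_eq_add_neg]
  have h16 : (16 : ℂ) • T (tp x y z) = (16 : ℂ) • tp (T x) (T y) (T z) := by
    rw [← hsmul, tp_polarization x y z, tp_polarization (T x) (T y) (T z)]
    simp only [hsub, hadd, hsmul, ← h1]
  have := congrArg (fun w => (16 : ℂ)⁻¹ • w) h16
  simpa [smul_smul] using this
end

section
/- Let T : A → B be a (not necessarily linear nor continuous) 2-local triple homomorphism between C*-algebras, and let e ∈ A be a tripotent with T(e) = 0. Then T vanishes on A_2(e) ⊕ A_1(e): for every a ∈ A of the form a = a_1 + a_2 with {e,e,a_1} = (1/2) a_1 and {e,e,a_2} = a_2, one has T(a) = 0. -/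
lemma tp_add_right {A : Type*} [NonUnitalCStarAlgebra A] (x y z w : A) :
    tp x y (z + w) = tp x y z + tp x y w := by
  simp only [tp, mul_add, add_mul, ← smul_add]
  congr 1
  abel

lemma tp_smul_right {A : Type*} [NonUnitalCStarAlgebra A] (c : ℂ) (x y z : A) :
    tp x y (c • z) = c • tp x y z := by
  simp only [tp, mul_smul_comm, smul_mul_assoc, ← smul_add, smul_comm c]

lemma tp_zero {B : Type*} [NonUnitalCStarAlgebra B] (w : B) : tp 0 0 w = 0 := by
  simp [tp]

/-- If `T e = 0` for a tripotent `e`, then a 2-local triple homomorphism `T` vanishes on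
the Peirce space `A_2(e) ⊕ A_1(e)`. -/
theorem twoLocal_tripleHom_vanishes_on_peirce
    {A B : Type*} [NonUnitalCStarAlgebra A] [NonUnitalCStarAlgebra B]
    (T : A → B) (hT : Is2LocalTripleHom T)
    (e : A) (he : e * star e * e = e) (hTe : T e = 0) :
    ∀ a a₁ a₂ : A, a = a₁ + a₂ → tp e e a₁ = (2⁻¹ : ℂ) • a₁ → tp e e a₂ = a₂ →
      T a = 0 := by
  intro a a₁ a₂ ha h1 h2
  obtain ⟨Φ, hΦ, hΦe, hΦa⟩ := hT e a
  have hΦe0 : Φ e = 0 := hΦe.trans hTe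
  -- first identity : Φ (½ a₁ + a₂) = 0
  have key1 : Φ ((2⁻¹ : ℂ) • a₁ + a₂) = 0 := by
    have := hΦ e e a
    rw [hΦe0, tp_zero] at this
    rw [ha, tp_add_right, h1, h2] at this
    exact this
  -- second identity : Φ (¼ a₁ + a₂) = 0
  have key2 : Φ ((4⁻¹ : ℂ) • a₁ + a₂) = 0 := by
    have := hΦ e e (tp e e a)
    rw [hΦe0, tp_zero] at this
    rw [ha, tp_add_right, h1, h2, tp_add_right, tp_smul_right, h1, h2,
      smul_smul] at this
    norm_num at this
    convert this using 3
    norm_num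
  have ha1 : Φ a₁ = 0 := by
    have k1 : (2⁻¹ : ℂ) • Φ a₁ + Φ a₂ = 0 := by
      rw [← map_smul, ← map_add]; exact key1
    have k2 : (4⁻¹ : ℂ) • Φ a₁ + Φ a₂ = 0 := by
      rw [← map_smul, ← map_add]; exact key2
    have h : ((2⁻¹ : ℂ) - 4⁻¹) • Φ a₁ = 0 := by
      rw [sub_smul]
      have := congrArg₂ (fun u v : B => u - v) k1 k2
      simpa using this
    rcases smul_eq_zero.mp h with h' | h'
    · exfalso; revert h'; norm_num
    · exact h'
  have ha2 : Φ a₂ = 0 := by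
    have := key1
    rw [map_add, map_smul, ha1, smul_zero, zero_add] at this
    exact this
  rw [← hΦa, ha, map_add, ha1, ha2, add_zero]
end

section
/- Let T : A → B be a (not necessarily linear) 2-local triple homomorphism between C*-algebras and let a ∈ A. Then for every m ∈ ℕ and all scalars α_1,…,α_m ∈ ℂ, T(Σ_{k=1}^m α_k a^{[2k−1]}) = Σ_{k=1}^m α_k (T(a))^{[2k−1]}. Consequently, T restricted to the norm-closed linear span of the odd triple powers {a^{[2k−1]} : k ∈ ℕ} (which is the JB*-subtriple of A generated by a) is a linear map. -/
/-- The odd triple powers of an element: `oddPow a n = a^[2n+1]`, with `a^[1] = a` and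
`a^[2n+3] = {a, a^[2n+1], a}`. -/
noncomputable def oddPow {A : Type*} [NonUnitalCStarAlgebra A] (a : A) : ℕ → A
  | 0 => a
  | n + 1 => tp a (oddPow a n) a

/-- The JB*-subtriple generated by `a`: the norm-closed linear span of the odd triple
powers of `a`. -/
noncomputable def subtripleGenBy {A : Type*} [NonUnitalCStarAlgebra A] (a : A) : Set A :=
  closure ((Submodule.span ℂ (Set.range (oddPow a)) : Submodule ℂ A) : Set A)

lemma oddPow_map {A B : Type*} [NonUnitalCStarAlgebra A] [NonUnitalCStarAlgebra B]
    (Φ : A →L[ℂ] B) (hΦ : IsTripleHom Φ) (a : A) (n : ℕ) :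
    Φ (oddPow a n) = oddPow (Φ a) n := by
  induction n with
  | zero => rfl
  | succ n ih => rw [oddPow, hΦ, ih]; rfl

lemma agree_on_subtriple {A B : Type*} [NonUnitalCStarAlgebra A] [NonUnitalCStarAlgebra B]
    (Φ Ψ : A →L[ℂ] B) (hΦ : IsTripleHom Φ) (hΨ : IsTripleHom Ψ)
    (a : A) (h : Φ a = Ψ a) : ∀ x ∈ subtripleGenBy a, Φ x = Ψ x := by
  have hs : subtripleGenBy a ⊆ {x | Φ x = Ψ x} := by
    apply closure_minimal ?_ (isClosed_eq Φ.continuous Ψ.continuous)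
    intro y hy
    have hy' : y ∈ Submodule.span ℂ (Set.range (oddPow a)) := hy
    induction hy' using Submodule.span_induction with
    | mem z hz =>
      obtain ⟨n, rfl⟩ := hz
      simp only [Set.mem_setOf_eq, oddPow_map Φ hΦ, oddPow_map Ψ hΨ, h]
    | zero => simp
    | add u v _ _ hu hv => simp_all
    | smul c u _ hu => simp_all
  exact fun x hx => hs hx

/-- A 2-local triple homomorphism satisfies
`T (Σ α_k a^[2k-1]) = Σ α_k (T a)^[2k-1]`; consequently its restriction to the
JB*-subtriple generated by `a` is linear. -/
theorem twoLocal_tripleHom_linear_on_singly_generated_subtriple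
    {A B : Type*} [NonUnitalCStarAlgebra A] [NonUnitalCStarAlgebra B]
    (T : A → B) (hT : Is2LocalTripleHom T) (a : A) :
    (∀ (m : ℕ) (α : ℕ → ℂ),
      T (∑ k ∈ Finset.range m, α k • oddPow a k)
        = ∑ k ∈ Finset.range m, α k • oddPow (T a) k) ∧
    (∀ x ∈ subtripleGenBy a, ∀ y ∈ subtripleGenBy a, T (x + y) = T x + T y) ∧
    (∀ (c : ℂ), ∀ x ∈ subtripleGenBy a, T (c • x) = c • T x) := by
  -- a fixed triple hom agreeing with `T` at `a`
  obtain ⟨Φ₀, hΦ₀, hΦ₀a, -⟩ := hT a a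
  -- `T` agrees with `Φ₀` on the subtriple generated by `a`
  have key : ∀ x ∈ subtripleGenBy a, T x = Φ₀ x := by
    intro x hx
    obtain ⟨Φ, hΦ, hΦa, hΦx⟩ := hT a x
    rw [← hΦx]
    exact agree_on_subtriple Φ Φ₀ hΦ hΦ₀ a (by rw [hΦa, hΦ₀a]) x hx
  -- membership facts
  have hsub : subtripleGenBy a =
      ((Submodule.span ℂ (Set.range (oddPow a))).topologicalClosure : Set A) := rfl
  refine ⟨?_, ?_, ?_⟩
  · intro m α
    obtain ⟨Φ, hΦ, hΦa, hΦs⟩ := hT a (∑ k ∈ Finset.range m, α k • oddPow a k)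
    rw [← hΦs, map_sum]
    simp [oddPow_map Φ hΦ, hΦa]
  · intro x hx y hy
    have hxy : x + y ∈ subtripleGenBy a := by
      rw [hsub] at hx hy ⊢
      exact add_mem hx hy
    rw [key _ hxy, key _ hx, key _ hy, map_add]
  · intro c x hx
    have hcx : c • x ∈ subtripleGenBy a := by
      rw [hsub] at hx ⊢
      exact Submodule.smul_mem _ c hx
    rw [key _ hcx, key _ hx, map_smul]
end

section
/- Let T : A → B be a (not necessarily linear) 2-local triple homomorphism between C*-algebras, and let e and f be two orthogonal tripotents in A (i.e., e e* e = e, f f* f = f, and {e,e,f} = 0). Then T(e + f) = T(e) + T(f). -/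
private lemma idem_orth {A : Type*} [NonUnitalCStarAlgebra A] (p q g : A)
    (hp : p * p = p) (hq : q * q = q)
    (hs : p * g + g * q = 0) : p * g = 0 ∧ g * q = 0 := by
  have h1 : p * g = -(g * q) := eq_neg_of_add_eq_zero_left hs
  have h1' : g * q = -(p * g) := eq_neg_of_add_eq_zero_right hs
  have h3 : p * g = -(p * g * q) := by
    calc p * g = p * (p * g) := by rw [← mul_assoc, hp]
    _ = p * -(g * q) := by rw [← h1]
    _ = -(p * g * q) := by rw [mul_neg, mul_assoc]
  have h4 : g * q = -(p * g * q) := by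
    calc g * q = (g * q) * q := by rw [mul_assoc, hq]
    _ = -(p * g) * q := by rw [← h1']
    _ = -(p * g * q) := by rw [neg_mul]
  have heq : p * g = g * q := h3.trans h4.symm
  have h2 : (2 : ℂ) • (p * g) = 0 := by
    rw [two_smul]
    nth_rewrite 2 [heq]
    exact hs
  have hz : p * g = 0 := by
    rcases smul_eq_zero.mp h2 with h | h
    · norm_num at h
    · exact h
  exact ⟨hz, heq ▸ hz⟩

/-- A 2-local triple homomorphism is additive on orthogonal tripotents. -/
theorem twoLocal_tripleHom_additive_on_orthogonal_tripotents
    {A B : Type*} [NonUnitalCStarAlgebra A] [NonUnitalCStarAlgebra B]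
    (T : A → B) (hT : Is2LocalTripleHom T)
    (e f : A) (he : e * star e * e = e) (hf : f * star f * f = f)
    (hef : tp e e f = 0) :
    T (e + f) = T e + T f := by
  -- step 1: consequences of orthogonality
  have hsum : (e * star e) * f + f * (star e * e) = 0 := by
    have h := hef
    unfold tp at h
    rw [smul_eq_zero] at h
    rcases h with h | h
    · norm_num at h
    · calc (e * star e) * f + f * (star e * e)
          = e * star e * f + f * star e * e := by rw [mul_assoc f]
      _ = 0 := h
  have hpp : (e * star e) * (e * star e) = e * star e := by
    calc (e * star e) * (e * star e) = (e * star e * e) * star e := by noncomm_ring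
    _ = e * star e := by rw [he]
  have hqq : (star e * e) * (star e * e) = star e * e := by
    calc (star e * e) * (star e * e) = star e * (e * star e * e) := by noncomm_ring
    _ = star e * e := by rw [he]
  obtain ⟨hef0, hfe0⟩ := idem_orth (e * star e) (star e * e) f hpp hqq hsum
  -- star e * (e * star e) = star e
  have hse : star e * (e * star e) = star e := by
    have := congrArg star he
    simpa [star_mul, mul_assoc] using this
  have hsef : star e * f = 0 := by
    calc star e * f = (star e * (e * star e)) * f := by rw [hse]
    _ = star e * ((e * star e) * f) := by rw [mul_assoc]
    _ = 0 := by rw [hef0, mul_zero]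
  have hfse : f * star e = 0 := by
    conv_lhs => rw [← hse]
    rw [show f * (star e * (e * star e)) = (f * (star e * e)) * star e by noncomm_ring,
      hfe0, zero_mul]
  have hsfe : star f * e = 0 := by
    have := congrArg star hsef
    simpa [star_mul] using this
  have hesf : e * star f = 0 := by
    have := congrArg star hfse
    simpa [star_mul] using this
  -- step 2: the cube of x = e + 2f
  set x : A := e + (2 : ℂ) • f with hx
  have hsx : star x = star e + (2 : ℂ) • star f := by
    simp [hx, star_smul]
  have hcube : x * star x * x = e + (8 : ℂ) • f := by
    rw [hx, hsx]
    rw [add_mul, mul_add, add_mul, add_mul, mul_add]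
    simp only [smul_mul_assoc, mul_smul_comm, smul_smul, smul_add, add_mul, mul_add]
    simp only [mul_assoc, hsef, hfse, hsfe, hesf, mul_zero, zero_mul, smul_zero,
      add_zero, zero_add]
    rw [← mul_assoc e (star e) e, he, ← mul_assoc f (star f) f, hf]
    norm_num
  have htp : tp x x x = e + (8 : ℂ) • f := by
    unfold tp
    rw [← two_smul ℂ (x * star x * x), smul_smul]
    norm_num
    exact hcube
  -- step 3: express e, f, e + f as linear combinations of x and tp x x x
  have hexp_e : e = (3⁻¹ : ℂ) • ((4 : ℂ) • x - tp x x x) := by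
    rw [htp, hx]; module
  have hexp_f : f = (6⁻¹ : ℂ) • (tp x x x - x) := by
    rw [htp, hx]; module
  have hexp_ef : e + f = (6⁻¹ : ℂ) • ((7 : ℂ) • x - tp x x x) := by
    rw [htp, hx]; module
  -- step 4: apply 2-locality
  obtain ⟨Φ₁, hΦ₁, hΦ₁x, hΦ₁e⟩ := hT x e
  obtain ⟨Φ₂, hΦ₂, hΦ₂x, hΦ₂f⟩ := hT x f
  obtain ⟨Φ₃, hΦ₃, hΦ₃x, hΦ₃s⟩ := hT x (e + f)
  set y := T x with hy
  set Y := tp y y y with hY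
  have key : ∀ (Φ : A →L[ℂ] B), IsTripleHom Φ → Φ x = y →
      ∀ (c d : ℂ) (a : A), a = c • (d • x - tp x x x) → Φ a = c • (d • y - Y) := by
    intro Φ hΦ hΦx c d a ha
    rw [ha, map_smul, map_sub, map_smul, hΦ x x x, hΦx, hY]
  have h1 : T e = (3⁻¹ : ℂ) • ((4 : ℂ) • y - Y) := by
    rw [← hΦ₁e]; exact key Φ₁ hΦ₁ hΦ₁x _ _ _ hexp_e
  have h2 : T f = (6⁻¹ : ℂ) • (Y - y) := by
    rw [← hΦ₂f, hexp_f, map_smul, map_sub, hΦ₂ x x x, hΦ₂x, hY]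
  have h3 : T (e + f) = (6⁻¹ : ℂ) • ((7 : ℂ) • y - Y) := by
    rw [← hΦ₃s]; exact key Φ₃ hΦ₃ hΦ₃x _ _ _ hexp_ef
  rw [h1, h2, h3]
  module
end

section
/- Let T : A → B be a (not necessarily linear) 2-local triple homomorphism between C*-algebras, and let e_1,…,e_n be mutually orthogonal tripotents in A (e_i e_i* e_i = e_i for each i, and {e_i,e_i,e_j} = 0 for i ≠ j). Then T(Σ_{i=1}^n λ_i e_i) = Σ_{i=1}^n λ_i T(e_i) for all λ_1,…,λ_n ∈ ℂ; in particular T(Σ_{i=1}^n e_i) = Σ_{i=1}^n T(e_i). -/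
/-!
Put `b = ∑ cᵢ eᵢ` with real `cᵢ ≠ 0` having distinct squares. Orthogonality makes the triple
product coordinatewise on the span of the `eᵢ`, so the odd triple powers are
`b^[2k+1] = ∑ cᵢ^(2k+1) eᵢ`, and Lagrange interpolation at the nodes `cᵢ²` writes each `eⱼ` as a
linear combination of them. Triple homomorphisms send `b^[2k+1]` to `Φ(b)^[2k+1]`, so two of them
that agree at `b` agree on the span of its odd powers. By 2-locality, a triple homomorphism `Φ`
with `Φ b = T b` therefore agrees with `T` on that span, and `T (∑ λᵢ eᵢ) = Φ (∑ λᵢ eᵢ)` is linear.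
-/

open Finset Submodule

theorem IsIdempotentElem.mul_eq_zero_of_mul_add_mul_eq_zero {R : Type*} [NonUnitalRing R]
    [Module ℂ R] {p q x : R} (hp : IsIdempotentElem p) (hq : IsIdempotentElem q)
    (h : p * x + x * q = 0) : p * x = 0 ∧ x * q = 0 := by
  have hleft : p * x + p * x * q = 0 := by
    simpa [mul_add, ← mul_assoc, hp.eq] using congrArg (p * ·) h
  have hright : p * x * q + x * q = 0 := by
    simpa [add_mul, mul_assoc, hq.eq] using congrArg (· * q) h
  have hpx : p * x = 0 := by
    have : (2 : ℂ) • (p * x) = 0 := by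
      calc (2 : ℂ) • (p * x) = (p * x + p * x * q) - (p * x * q + x * q) + (p * x + x * q) := by
            rw [two_smul]; abel
        _ = 0 := by rw [hleft, hright, h]; abel
    simpa using this
  exact ⟨hpx, by simpa [hpx] using h⟩

section TriplePowers

variable {A B : Type*} [NonUnitalCStarAlgebra A] [NonUnitalCStarAlgebra B]

theorem star_mul_eq_zero_of_tp_eq_zero {g h : A} (hg : g * star g * g = g)
    (hgh : tp g g h = 0) : star g * h = 0 ∧ h * star g = 0 := by
  have hg' : star g * g * star g = star g := by
    simpa [star_mul, mul_assoc] using congrArg star hg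
  have hsum : g * star g * h + h * (star g * g) = 0 := by
    rw [tp, smul_eq_zero] at hgh
    simpa [mul_assoc] using hgh
  obtain ⟨hph, hhq⟩ := IsIdempotentElem.mul_eq_zero_of_mul_add_mul_eq_zero
    (by rw [IsIdempotentElem, ← mul_assoc, hg]) (by rw [IsIdempotentElem, ← mul_assoc, hg']) hsum
  constructor
  · rw [← hg', mul_assoc, mul_assoc, ← mul_assoc g, hph, mul_zero]
  · rw [← hg', ← mul_assoc, ← mul_assoc, mul_assoc h, hhq, zero_mul]

/-- `oddTriplePow b k` is the odd power `b^[2k+1]` of the triple product. -/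
noncomputable def oddTriplePow (b : A) : ℕ → A
  | 0 => b
  | k + 1 => tp b b (oddTriplePow b k)

theorem IsTripleHom.map_oddTriplePow {Φ : A →L[ℂ] B} (hΦ : IsTripleHom Φ) (b : A) (k : ℕ) :
    Φ (oddTriplePow b k) = oddTriplePow (Φ b) k := by
  induction k with
  | zero => rfl
  | succ k ih => rw [oddTriplePow, oddTriplePow, hΦ, ih]

theorem Is2LocalTripleHom.eqOn_span_oddTriplePow {T : A → B} (hT : Is2LocalTripleHom T)
    {Φ : A →L[ℂ] B} (hΦ : IsTripleHom Φ) {b : A} (hb : Φ b = T b) :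
    Set.EqOn Φ T (span ℂ (Set.range (oddTriplePow b))) := by
  intro y hy
  obtain ⟨Ψ, hΨ, hΨb, hΨy⟩ := hT b y
  have hpow : Set.EqOn (Φ : A →ₗ[ℂ] B) (Ψ : A →ₗ[ℂ] B) (Set.range (oddTriplePow b)) := by
    rintro _ ⟨k, rfl⟩
    simp only [ContinuousLinearMap.coe_coe, hΦ.map_oddTriplePow, hΨ.map_oddTriplePow, hb, hΨb]
  exact (LinearMap.eqOn_span' hpow hy).trans hΨy

variable {ι : Type*} [Fintype ι] {e : ι → A}
  (he : ∀ i, e i * star (e i) * e i = e i) (horth : ∀ i j, i ≠ j → tp (e i) (e i) (e j) = 0)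
include he horth

theorem sum_smul_mul_star_sum_smul_mul_sum_smul (a b d : ι → ℂ) :
    (∑ i, a i • e i) * star (∑ i, b i • e i) * (∑ i, d i • e i) =
      ∑ i, (a i * star (b i) * d i) • e i := by
  have hstar : ∀ i j, i ≠ j → star (e i) * e j = 0 := fun i j hij =>
    (star_mul_eq_zero_of_tp_eq_zero (he i) (horth i j hij)).1
  have hstar' : ∀ i j, i ≠ j → e j * star (e i) = 0 := fun i j hij =>
    (star_mul_eq_zero_of_tp_eq_zero (he i) (horth i j hij)).2
  have hleft : (∑ i, a i • e i) * star (∑ i, b i • e i) =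
      ∑ i, (a i * star (b i)) • (e i * star (e i)) := by
    simp only [star_sum, star_smul, sum_mul_sum, smul_mul_smul_comm]
    refine sum_congr rfl fun i _ => Fintype.sum_eq_single i fun j hj => ?_
    rw [hstar' j i hj, smul_zero]
  rw [hleft, sum_mul_sum]
  refine sum_congr rfl fun i _ => ?_
  rw [Fintype.sum_eq_single i fun j hj => by
    rw [smul_mul_smul_comm, mul_assoc (e i), hstar i j (Ne.symm hj), mul_zero, smul_zero]]
  rw [smul_mul_smul_comm, he]

theorem tp_sum_smul (a b d : ι → ℂ) :
    tp (∑ i, a i • e i) (∑ i, b i • e i) (∑ i, d i • e i) =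
      ∑ i, (a i * star (b i) * d i) • e i := by
  rw [tp, sum_smul_mul_star_sum_smul_mul_sum_smul he horth,
    sum_smul_mul_star_sum_smul_mul_sum_smul he horth, ← sum_add_distrib, smul_sum]
  refine sum_congr rfl fun i _ => ?_
  rw [← add_smul, smul_smul]
  congr 1
  ring

theorem oddTriplePow_sum_smul (c : ι → ℝ) (k : ℕ) :
    oddTriplePow (∑ i, (c i : ℂ) • e i) k = ∑ i, (c i : ℂ) ^ (2 * k + 1) • e i := by
  induction k with
  | zero => simp [oddTriplePow]
  | succ k ih =>
    rw [oddTriplePow, ih, tp_sum_smul he horth]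
    refine sum_congr rfl fun i _ => ?_
    rw [Complex.star_def, Complex.conj_ofReal]
    ring_nf

theorem mem_span_oddTriplePow (c : ι → ℝ) (hc : Function.Injective fun i => c i ^ 2)
    (j : ι) (hcj : c j ≠ 0) :
    e j ∈ span ℂ (Set.range (oddTriplePow (∑ i, (c i : ℂ) • e i))) := by
  classical
  -- Lagrange interpolation at the nodes `c i ^ 2` isolates `e j` among the `b^[2k+1]`.
  set L := Lagrange.basis univ (fun i => (c i : ℂ) ^ 2) j
  have hnodes : Set.InjOn (fun i => (c i : ℂ) ^ 2) (univ : Finset ι) := fun i _ i' _ h =>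
    hc (Complex.ofReal_injective (by push_cast; exact h))
  have hcoeff : ∀ i, ∑ k ∈ L.support, L.coeff k * (c i : ℂ) ^ (2 * k + 1) =
      if i = j then (c j : ℂ) else 0 := by
    intro i
    have hodd : ∑ k ∈ L.support, L.coeff k * (c i : ℂ) ^ (2 * k + 1) =
        (c i : ℂ) * L.eval ((c i : ℂ) ^ 2) := by
      rw [Polynomial.eval_eq_sum, Polynomial.sum_def, mul_sum]
      exact sum_congr rfl fun k _ => by ring
    rw [hodd]
    split_ifs with hij
    · rw [hij, Lagrange.eval_basis_self hnodes (mem_univ j), mul_one]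
    · rw [Lagrange.eval_basis_of_ne (v := fun i => (c i : ℂ) ^ 2) (Ne.symm hij) (mem_univ i),
        mul_zero]
  have hsum : ∑ k ∈ L.support, L.coeff k • oddTriplePow (∑ i, (c i : ℂ) • e i) k =
      (c j : ℂ) • e j := by
    simp only [oddTriplePow_sum_smul he horth, smul_sum, smul_smul]
    rw [sum_comm]
    simp only [← sum_smul, hcoeff, ite_smul, zero_smul, sum_ite_eq', mem_univ, if_true]
  have hmem : (c j : ℂ) • e j ∈ span ℂ (Set.range (oddTriplePow (∑ i, (c i : ℂ) • e i))) :=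
    hsum ▸ sum_mem fun k _ => smul_mem _ _ (subset_span ⟨k, rfl⟩)
  exact (smul_mem_iff _ (Complex.ofReal_ne_zero.mpr hcj)).mp hmem

end TriplePowers

/-- A 2-local triple homomorphism is linear on finite linear combinations of mutually
orthogonal tripotents. -/
theorem twoLocal_tripleHom_linear_on_orthogonal_tripotents
    {A B : Type*} [NonUnitalCStarAlgebra A] [NonUnitalCStarAlgebra B]
    (T : A → B) (hT : Is2LocalTripleHom T)
    (n : ℕ) (e : Fin n → A) (he : ∀ i, e i * star (e i) * e i = e i)
    (horth : ∀ i j, i ≠ j → tp (e i) (e i) (e j) = 0) :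
    (∀ l : Fin n → ℂ, T (∑ i, l i • e i) = ∑ i, l i • T (e i)) ∧
    T (∑ i, e i) = ∑ i, T (e i) := by
  set c : Fin n → ℝ := fun i => (i : ℝ) + 1
  have hc : Function.Injective fun i => c i ^ 2 := fun i i' h => by
    have h' : ((i : ℝ) + 1) ^ 2 = ((i' : ℝ) + 1) ^ 2 := h
    rw [sq_eq_sq₀ (by positivity) (by positivity), add_left_inj, Nat.cast_inj] at h'
    exact Fin.ext h'
  have hspan := fun j => mem_span_oddTriplePow he horth c hc j (by positivity)
  obtain ⟨Φ, hΦ, hΦb, -⟩ := hT (∑ i, (c i : ℂ) • e i) (∑ i, (c i : ℂ) • e i)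
  have hΦT := hT.eqOn_span_oddTriplePow hΦ hΦb
  have hlin : ∀ l : Fin n → ℂ, T (∑ i, l i • e i) = ∑ i, l i • T (e i) := fun l => by
    rw [← hΦT (sum_mem fun i _ => smul_mem _ _ (hspan i)), map_sum]
    exact sum_congr rfl fun i _ => by rw [map_smul, hΦT (hspan i)]
  exact ⟨hlin, by simpa using hlin 1⟩
end

section
/- Let T : A → B be a (not necessarily linear) 2-local triple homomorphism between C*-algebras. Suppose e ∈ A is a tripotent and z ∈ A satisfies {e,e,z} = 0 and ‖z‖ < 1. Then for every w ∈ A and every bounded linear triple homomorphism Φ : A → B satisfying Φ(w) = T(w) and Φ(e + z) = T(e + z), one has Φ(e) = T(e). -/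
lemma tp_sym {A : Type*} [NonUnitalCStarAlgebra A] (x y : A) :
    tp x y x = x * star y * x := by
  unfold tp
  rw [← two_smul ℂ (x * star y * x), smul_smul]
  norm_num

/-- Sequence of odd "powers" of `z`. -/
noncomputable def gseq {A : Type*} [NonUnitalCStarAlgebra A] (z : A) : ℕ → A
  | 0 => z
  | n + 1 => gseq z n * star z * gseq z n

lemma gseq_orth {A : Type*} [NonUnitalCStarAlgebra A] (e z : A)
    (h1 : star e * z = 0) (h2 : z * star e = 0) :
    ∀ n, star e * gseq z n = 0 ∧ gseq z n * star e = 0 := by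
  intro n
  induction n with
  | zero => exact ⟨h1, h2⟩
  | succ n ih =>
    constructor
    · show star e * (gseq z n * star z * gseq z n) = 0
      rw [← mul_assoc, ← mul_assoc, ih.1, zero_mul, zero_mul]
    · show (gseq z n * star z * gseq z n) * star e = 0
      rw [mul_assoc, ih.2, mul_zero]

lemma gseq_norm {A : Type*} [NonUnitalCStarAlgebra A] (z : A) (hz1 : ‖z‖ ≤ 1) :
    ∀ n, ‖gseq z n‖ ≤ ‖z‖ ^ (n + 1) := by
  intro n
  induction n with
  | zero => simp [gseq]
  | succ n ih =>
    have h0 : (0:ℝ) ≤ ‖z‖ := norm_nonneg z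
    calc ‖gseq z (n+1)‖ = ‖gseq z n * star z * gseq z n‖ := rfl
      _ ≤ ‖gseq z n * star z‖ * ‖gseq z n‖ := norm_mul_le _ _
      _ ≤ ‖gseq z n‖ * ‖star z‖ * ‖gseq z n‖ := by
          gcongr
          exact norm_mul_le _ _
      _ = ‖gseq z n‖ * ‖z‖ * ‖gseq z n‖ := by rw [norm_star]
      _ ≤ ‖z‖ ^ (n+1) * ‖z‖ * ‖z‖ ^ (n+1) := by gcongr
      _ = ‖z‖ ^ (2*n + 3) := by ring
      _ ≤ ‖z‖ ^ (n + 2) := pow_le_pow_of_le_one h0 hz1 (by omega)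

/-- If `e` is a tripotent and `z` lies in the Peirce-0 space of `e` with `‖z‖ < 1`, then
any bounded linear triple homomorphism agreeing with `T` at some `w` and at `e + z` also
agrees with `T` at `e`. -/
theorem twoLocal_tripleHom_agree_at_tripotent
    {A B : Type*} [NonUnitalCStarAlgebra A] [NonUnitalCStarAlgebra B]
    (T : A → B) (hT : Is2LocalTripleHom T)
    (e z : A) (he : e * star e * e = e) (hz : tp e e z = 0) (hznorm : ‖z‖ < 1) :
    ∀ (w : A) (Φ : A →L[ℂ] B), IsTripleHom Φ → Φ w = T w → Φ (e + z) = T (e + z) →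
      Φ e = T e := by
  intro w Φ hΦ hΦw hΦez
  obtain ⟨Ψ, hΨ, hΨe, hΨez⟩ := hT e (e + z)
  -- derive orthogonality of e and z
  have E : e * (star e * z) + z * (star e * e) = 0 := by
    have h : (2⁻¹ : ℂ) • (e * star e * z + z * star e * e) = 0 := hz
    have h2 : e * star e * z + z * star e * e = 0 := by
      rcases smul_eq_zero.mp h with h' | h'
      · exact absurd h' (by norm_num)
      · exact h'
    simpa [mul_assoc] using h2
  have L1 : ∀ x : A, e * (star e * (e * x)) = e * x := fun x => by
    rw [← mul_assoc, ← mul_assoc, he]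
  have hq : star e * (e * star e) = star e := by
    have h := congrArg star he
    simpa [star_mul, mul_assoc] using h
  have L2 : ∀ x : A, star e * (e * (star e * x)) = star e * x := fun x => by
    rw [← mul_assoc, ← mul_assoc, mul_assoc (star e) e (star e), hq]
  have he' : e * (star e * e) = e := by rw [← mul_assoc]; exact he
  have A1 : e * (star e * (z * (star e * e))) + z * (star e * e) = 0 := by
    have h := congrArg (fun x => x * (star e * e)) E
    simp only [add_mul, zero_mul] at h
    simpa [mul_assoc, L2] using h
  have A2 : e * (star e * z) + e * (star e * (z * (star e * e))) = 0 := by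
    have h := congrArg (fun x => (e * star e) * x) E
    simp only [mul_add, mul_zero] at h
    simpa [mul_assoc, L1] using h
  have huv : e * (star e * z) = z * (star e * e) := by
    apply add_right_cancel (b := e * (star e * (z * (star e * e))))
    rw [A2, add_comm]
    exact A1.symm
  have hu : e * (star e * z) = 0 := by
    rw [← huv] at E
    have h2 : (2 : ℂ) • (e * (star e * z)) = 0 := by rw [two_smul]; exact E
    exact (smul_eq_zero.mp h2).resolve_left (by norm_num)
  have hv : z * (star e * e) = 0 := huv ▸ hu
  have hez1 : star e * z = 0 := by
    calc star e * z = star e * (e * (star e * z)) := (L2 z).symm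
      _ = 0 := by rw [hu, mul_zero]
  have hez2 : z * star e = 0 := by
    calc z * star e = z * (star e * (e * star e)) := by rw [hq]
      _ = z * (star e * e) * star e := by
          rw [← mul_assoc (star e) e (star e), ← mul_assoc]
      _ = 0 := by rw [hv, zero_mul]
  have h3 : star z * e = 0 := by simpa [star_mul] using congrArg star hez1
  have h4 : e * star z = 0 := by simpa [star_mul] using congrArg star hez2
  have L3 : ∀ x : A, e * (star z * x) = 0 := fun x => by
    rw [← mul_assoc, h4, zero_mul]
  -- expansion of the odd power
  have step : ∀ g : A, star e * g = 0 → g * star e = 0 →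
      (e + g) * star (e + z) * (e + g) = e + g * (star z * g) := by
    intro g h1 h2
    have L4 : ∀ x : A, g * (star e * x) = 0 := fun x => by
      rw [← mul_assoc, h2, zero_mul]
    simp [star_add, mul_add, add_mul, mul_assoc, he', h1, h3, L3, L4]
  -- the sequences e + gseq z n agree under Φ and Ψ
  have agree : ∀ n, Φ (e + gseq z n) = Ψ (e + gseq z n) := by
    intro n
    induction n with
    | zero =>
      show Φ (e + z) = Ψ (e + z)
      rw [hΦez, hΨez]
    | succ n ih =>
      obtain ⟨ho1, ho2⟩ := gseq_orth e z hez1 hez2 n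
      have hrec : e + gseq z (n + 1) = tp (e + gseq z n) (e + z) (e + gseq z n) := by
        rw [tp_sym, step _ ho1 ho2]
        show e + gseq z n * star z * gseq z n = e + gseq z n * (star z * gseq z n)
        rw [mul_assoc]
      rw [hrec, hΦ, hΨ, ih, hΦez, hΨez]
  -- limits
  have hz1 : ‖z‖ ≤ 1 := hznorm.le
  have hgz : Filter.Tendsto (fun n => gseq z n) Filter.atTop (nhds 0) := by
    have hb : Filter.Tendsto (fun n : ℕ => ‖z‖ ^ (n + 1)) Filter.atTop (nhds 0) :=
      (tendsto_pow_atTop_nhds_zero_of_lt_one (norm_nonneg z) hznorm).comp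
        (Filter.tendsto_add_atTop_nat 1)
    exact squeeze_zero_norm (gseq_norm z hz1) hb
  have hsum : Filter.Tendsto (fun n => e + gseq z n) Filter.atTop (nhds e) := by
    simpa using tendsto_const_nhds.add hgz
  have hΦlim : Filter.Tendsto (fun n => Φ (e + gseq z n)) Filter.atTop (nhds (Φ e)) :=
    (Φ.continuous.tendsto e).comp hsum
  have hΨlim : Filter.Tendsto (fun n => Φ (e + gseq z n)) Filter.atTop (nhds (Ψ e)) :=
    ((Ψ.continuous.tendsto e).comp hsum).congr (fun n => (agree n).symm)
  rw [tendsto_nhds_unique hΦlim hΨlim, hΨe]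
end

section
/- Let T : A → B be a (not necessarily linear) 2-local triple homomorphism between C*-algebras. For each tripotent e ∈ A and each y ∈ A with {e,e,y} = (1/2)y (i.e., y in the Peirce-1 space A_1(e)), one has T(e + y) = T(e) + T(y). -/
section Aux
variable {B : Type*} [NonUnitalCStarAlgebra B]


lemma aux_cube_zero (x : B) (h : x * (star x * x) = 0) : x = 0 := by
  have h1 : (star x * x) * (star x * x) = 0 := by
    have := congrArg (fun t => star x * t) h
    simpa [mul_assoc] using this
  have h2 : star x * x = 0 := by
    have := (CStarRing.star_mul_self_eq_zero_iff (star x * x)).mp ?_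
    · exact this
    · simpa [star_mul, mul_assoc, star_star] using h1
  exact (CStarRing.star_mul_self_eq_zero_iff x).mp h2

lemma key2 (u z1 z2 : B)
    (hu : u * (star u * u) = u)
    (b1 : u * (star u * z1) = z1)
    (k2 : z1 * star u = 0)
    (c2 : z2 * (star u * u) = z2)
    (k1 : star u * z2 = 0)
    (hc : (u + (z1 + z2)) * (star (u + (z1 + z2)) * (u + (z1 + z2))) = u + (z1 + z2)) :
    z1 = 0 ∧ z2 = 0 := by
  have hu' : star u * (u * star u) = star u := by
    have := congrArg star hu
    simpa [star_mul, mul_assoc, star_star] using this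
  have r1 : ∀ x : B, u * (star u * (u * x)) = u * x := fun x => by
    rw [show u * (star u * (u * x)) = (u * (star u * u)) * x by simp [mul_assoc], hu]
  have k2x : ∀ x : B, z1 * (star u * x) = 0 := fun x => by
    rw [← mul_assoc, k2, zero_mul]
  have k1x : ∀ x : B, star u * (z2 * x) = 0 := fun x => by
    rw [← mul_assoc, k1, zero_mul]
  have b1x : ∀ x : B, u * (star u * (z1 * x)) = z1 * x := fun x => by
    rw [show u * (star u * (z1 * x)) = (u * (star u * z1)) * x by simp [mul_assoc], b1]
  have c2x : ∀ x : B, z2 * (star u * (u * x)) = z2 * x := fun x => by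
    rw [show z2 * (star u * (u * x)) = (z2 * (star u * u)) * x by simp [mul_assoc], c2]
  have s_k2 : u * star z1 = 0 := by
    have := congrArg star k2; simpa [star_mul, star_star] using this
  have s_k2x : ∀ x : B, u * (star z1 * x) = 0 := fun x => by
    rw [← mul_assoc, s_k2, zero_mul]
  have s_k1 : star z2 * u = 0 := by
    have := congrArg star k1; simpa [star_mul, star_star] using this
  have s_k1x : ∀ x : B, star z2 * (u * x) = 0 := fun x => by
    rw [← mul_assoc, s_k1, zero_mul]
  have eqm1 : (star u * u) * star z2 = star z2 := by
    have := congrArg star c2; simpa [star_mul, mul_assoc, star_star] using this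
  have m1x : ∀ x : B, star u * (u * (star z2 * x)) = star z2 * x := fun x => by
    rw [show star u * (u * (star z2 * x)) = ((star u * u) * star z2) * x by simp [mul_assoc], eqm1]
  have sb1 : (star z1 * u) * star u = star z1 := by
    have := congrArg star b1; simpa [star_mul, mul_assoc, star_star] using this
  have cr1 : z1 * star z2 = 0 := by
    rw [← eqm1, show z1 * (star u * u * star z2) = (z1 * star u) * (u * star z2) by
      simp [mul_assoc], k2, zero_mul]
  have cr1x : ∀ x : B, z1 * (star z2 * x) = 0 := fun x => by
    rw [← mul_assoc, cr1, zero_mul]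
  have cr2 : star z1 * z2 = 0 := by
    rw [← sb1, show star z1 * u * star u * z2 = (star z1 * u) * (star u * z2) by
      simp [mul_assoc], k1, mul_zero]
  have cr2x : ∀ x : B, star z1 * (z2 * x) = 0 := fun x => by
    rw [← mul_assoc, cr2, zero_mul]
  have cr3 : z2 * star z1 = 0 := by
    rw [← c2, show z2 * (star u * u) * star z1 = z2 * (star u * (u * star z1)) by
      simp [mul_assoc], s_k2, mul_zero, mul_zero]
  have cr3x : ∀ x : B, z2 * (star z1 * x) = 0 := fun x => by
    rw [← mul_assoc, cr3, zero_mul]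
  have cr4 : star z2 * z1 = 0 := by
    rw [← b1, show star z2 * (u * (star u * z1)) = (star z2 * u) * (star u * z1) by
      simp [mul_assoc], s_k1, zero_mul]
  have cr4x : ∀ x : B, star z2 * (z1 * x) = 0 := fun x => by
    rw [← mul_assoc, cr4, zero_mul]
  simp only [star_add, add_mul, mul_add, mul_assoc, hu, b1, k1, k2, c2, s_k2, s_k1,
    r1, k2x, k1x, b1x, c2x, s_k2x, s_k1x, m1x, cr1, cr1x, cr2, cr2x, cr3, cr3x, cr4, cr4x,
    mul_zero, zero_mul, add_zero, zero_add] at hc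
  have hS : u * (star z2 * z2) + z1 * (star z1 * u) + z1 * (star z1 * z1)
      + z2 * (star u * z1) + z2 * (star z2 * z2) = 0 := by
    linear_combination (norm := abel) hc
  have t : u * (star z2 * z2) + z1 * (star z1 * u) + z1 * (star z1 * z1) = 0 := by
    have := congrArg (fun x => u * (star u * x)) hS
    simpa only [mul_add, r1, b1x, k1x, mul_zero, add_zero, zero_add] using this
  have t2 : u * (star z2 * z2) + z1 * (star z1 * u) = 0 := by
    have := congrArg (fun x => x * (star u * u)) t
    simpa only [add_mul, mul_assoc, c2, hu, k2x, mul_zero, add_zero, zero_mul] using this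
  have hz1cube : z1 * (star z1 * z1) = 0 := by
    linear_combination (norm := abel) t - t2
  have hz1 : z1 = 0 := aux_cube_zero z1 hz1cube
  subst hz1
  simp only [star_zero, mul_zero, zero_mul, add_zero, zero_add] at hS
  have t3 : star z2 * z2 = 0 := by
    have := congrArg (fun x => star u * x) hS
    simpa only [mul_add, m1x, k1x, mul_zero, add_zero, zero_add] using this
  exact ⟨rfl, (CStarRing.star_mul_self_eq_zero_iff z2).mp t3⟩

lemma key (u z : B) (hu : u * (star u * u) = u)
    (hz : u * (star u * z) + z * (star u * u) = z)
    (hc : (u + z) * (star (u + z) * (u + z)) = u + z) : z = 0 := by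
  have hu' : star u * (u * star u) = star u := by
    have := congrArg star hu
    simpa [star_mul, mul_assoc, star_star] using this
  have r1 : ∀ x : B, u * (star u * (u * x)) = u * x := fun x => by
    rw [show u * (star u * (u * x)) = (u * (star u * u)) * x by simp [mul_assoc], hu]
  have r2 : ∀ x : B, star u * (u * (star u * x)) = star u * x := fun x => by
    rw [show star u * (u * (star u * x)) = (star u * (u * star u)) * x by simp [mul_assoc], hu']
  have h3 : star u * (z * star u) = 0 := by
    have t := congrArg (fun x => star u * (x * star u)) hz
    simp only [add_mul, mul_add, mul_assoc] at t
    rw [r2, hu'] at t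
    exact add_eq_right.mp t
  have hb1 : u * (star u * (u * (star u * z))) = u * (star u * z) := r1 _
  have hk2 : (u * (star u * z)) * star u = 0 := by
    rw [show (u * (star u * z)) * star u = u * (star u * (z * star u)) by simp [mul_assoc],
      h3, mul_zero]
  have hc2 : (z * (star u * u)) * (star u * u) = z * (star u * u) := by
    rw [show (z * (star u * u)) * (star u * u) = z * (star u * (u * (star u * u))) by
      simp [mul_assoc], hu]
  have hk1 : star u * (z * (star u * u)) = 0 := by
    rw [show star u * (z * (star u * u)) = (star u * (z * star u)) * u by simp [mul_assoc],
      h3, zero_mul]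
  have hcc : (u + (u * (star u * z) + z * (star u * u))) *
      (star (u + (u * (star u * z) + z * (star u * u))) *
        (u + (u * (star u * z) + z * (star u * u)))) =
      u + (u * (star u * z) + z * (star u * u)) := by
    rw [hz]; exact hc
  obtain ⟨e1, e2⟩ := key2 u (u * (star u * z)) (z * (star u * u)) hu hb1 hk2 hc2 hk1 hcc
  rw [← hz, e1, e2, add_zero]

end Aux

lemma tp_cube {A : Type*} [NonUnitalCStarAlgebra A] (x : A) : tp x x x = x * star x * x := by
  rw [tp, ← two_smul ℂ, smul_smul]
  norm_num

lemma tp_add₃ {A : Type*} [NonUnitalCStarAlgebra A] (x y a b : A) :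
    tp x y (a + b) = tp x y a + tp x y b := by
  simp only [tp, mul_add, add_mul, ← smul_add]
  congr 1
  abel

lemma tp_sub₃ {A : Type*} [NonUnitalCStarAlgebra A] (x y a b : A) :
    tp x y (a - b) = tp x y a - tp x y b := by
  simp only [tp, mul_sub, sub_mul, ← smul_sub]
  congr 1
  abel


/-- A 2-local triple homomorphism is additive on a tripotent `e` and any element of the
Peirce-1 space of `e`. -/
theorem twoLocal_tripleHom_additive_tripotent_peirce_one
    {A B : Type*} [NonUnitalCStarAlgebra A] [NonUnitalCStarAlgebra B]
    (T : A → B) (hT : Is2LocalTripleHom T)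
    (e y : A) (he : e * star e * e = e) (hy : tp e e y = (2⁻¹ : ℂ) • y) :
    T (e + y) = T e + T y := by
  obtain ⟨Φ, hΦt, hΦa, hΦe⟩ := hT (e + y) e
  obtain ⟨Ψ, hΨt, hΨa, hΨy⟩ := hT (e + y) y
  obtain ⟨Θ, hΘt, hΘe, hΘy⟩ := hT e y
  have he' : tp e e e = e := by rw [tp_cube]; exact he
  -- u = T e is a tripotent
  have hu : T e * star (T e) * T e = T e := by
    have h := hΘt e e e
    rw [he', hΘe, tp_cube] at h
    exact h.symm
  -- c = T(e+y) - T(y) is a tripotent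
  have hΨe : Ψ e = T (e + y) - T y := by
    have h : Ψ (e + y) - Ψ y = T (e + y) - T y := by rw [hΨa, hΨy]
    rw [← map_sub, add_sub_cancel_right] at h
    exact h
  have hcc : (T (e + y) - T y) * star (T (e + y) - T y) * (T (e + y) - T y)
      = T (e + y) - T y := by
    have h := hΨt e e e
    rw [he', hΨe, tp_cube] at h
    exact h.symm
  -- Peirce relations
  have hA : tp (T e) (T e) (T (e + y)) = (2⁻¹ : ℂ) • T e + (2⁻¹ : ℂ) • T (e + y) := by
    have h := hΦt e e (e + y)
    have h2 : tp e e (e + y) = (2⁻¹ : ℂ) • e + (2⁻¹ : ℂ) • (e + y) := by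
      rw [tp_add₃, he', hy]
      module
    rw [h2, map_add, map_smul, map_smul, hΦe, hΦa] at h
    exact h.symm
  have hB : tp (T e) (T e) (T y) = (2⁻¹ : ℂ) • T y := by
    have h := hΘt e e y
    rw [hy, map_smul, hΘe, hΘy] at h
    exact h.symm
  have hC : tp (T e) (T e) (T e) = T e := by rw [tp_cube]; exact hu
  set u := T e
  set v := T y
  set w := T (e + y)
  set z := w - v - u with hzdef
  have hzP : tp u u z = (2⁻¹ : ℂ) • z := by
    rw [hzdef, tp_sub₃, tp_sub₃, hA, hB, hC]
    module
  have hzmul : u * (star u * z) + z * (star u * u) = z := by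
    have h : (2⁻¹ : ℂ) • (u * star u * z + z * star u * u) = (2⁻¹ : ℂ) • z := hzP
    have h2 := smul_right_injective B (by norm_num : (2⁻¹ : ℂ) ≠ 0) h
    simpa [mul_assoc] using h2
  have hcz : (u + z) * (star (u + z) * (u + z)) = u + z := by
    have huz : u + z = w - v := by rw [hzdef]; abel
    rw [huz, ← mul_assoc]
    exact hcc
  have hz0 : z = 0 := key u z (by rw [← mul_assoc]; exact hu) hzmul hcz
  have : w - v - u = 0 := hz0
  linear_combination (norm := abel) this
end

section
/- Let A be a unital C*-algebra, B a C*-algebra, and T : A → B a (not necessarily linear nor continuous) 2-local triple homomorphism, and set u := T(1). Then u is a tripotent in B and: (a) {u, u, T(a)} = T(a) for every a ∈ A (i.e., T(A) ⊆ B_2(u)); (b) {u, T(b), u} = T(b) for every self-adjoint b ∈ A; (c) if a ∈ A is positive, then u* T(a) is a positive element of B (equivalently, T(a) is positive in the unital JB*-algebra B_2(u)). -/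
lemma tp_sandwich {B : Type*} [NonUnitalCStarAlgebra B] (x y : B) :
    tp x y x = x * star y * x := by
  unfold tp
  rw [← two_smul ℂ, smul_smul]
  norm_num

lemma tp_one_one {A : Type*} [CStarAlgebra A] (a : A) : tp 1 1 a = a := by
  unfold tp
  simp only [star_one, one_mul, mul_one]
  rw [← two_smul ℂ, smul_smul]
  norm_num

lemma tp_one_mid {A : Type*} [CStarAlgebra A] (b : A) : tp 1 b 1 = star b := by
  rw [tp_sandwich]; simp

/-- A triple homomorphism sends `1` to a tripotent. -/
lemma IsTripleHom.tripotent {A B : Type*} [CStarAlgebra A] [NonUnitalCStarAlgebra B]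
    {Φ : A →L[ℂ] B} (hΦ : IsTripleHom Φ) :
    Φ 1 * star (Φ 1) * Φ 1 = Φ 1 := by
  have h := hΦ 1 1 1
  rw [tp_one_one, tp_sandwich] at h
  exact h.symm

/-- Let `T` be a 2-local triple homomorphism from a unital C*-algebra `A` into a
C*-algebra `B`, and set `u := T 1`. Then `u` is a tripotent, `T` takes values in the
Peirce-2 space of `u`, maps self-adjoint elements into the self-adjoint part of the
Peirce-2 space of `u`, and maps positive elements to elements which are positive in the
JB*-algebra `B_2(u)` (equivalently, `star u * T a` is positive in `B`). -/
theorem twoLocal_tripleHom_unital_range_in_peirce_two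
    {A B : Type*} [CStarAlgebra A] [PartialOrder A] [StarOrderedRing A]
    [NonUnitalCStarAlgebra B] [PartialOrder B] [StarOrderedRing B]
    (T : A → B) (hT : Is2LocalTripleHom T) :
    (T 1 * star (T 1) * T 1 = T 1) ∧
    (∀ a : A, tp (T 1) (T 1) (T a) = T a) ∧
    (∀ b : A, IsSelfAdjoint b → tp (T 1) (T b) (T 1) = T b) ∧
    (∀ a : A, 0 ≤ a → 0 ≤ star (T 1) * T a) := by
  refine ⟨?_, ?_, ?_, ?_⟩
  · obtain ⟨Φ, hΦ, h1, -⟩ := hT 1 1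
    rw [← h1]; exact hΦ.tripotent
  · intro a
    obtain ⟨Φ, hΦ, h1, ha⟩ := hT 1 a
    have h := hΦ 1 1 a
    rw [tp_one_one, h1, ha] at h
    exact h.symm
  · intro b hb
    obtain ⟨Φ, hΦ, h1, hb'⟩ := hT 1 b
    have h := hΦ 1 b 1
    rw [tp_one_mid, hb.star_eq, h1, hb'] at h
    exact h.symm
  · intro a ha
    obtain ⟨Φ, hΦ, h1, ha'⟩ := hT 1 a
    set u := Φ 1 with hu
    set c := CFC.sqrt a with hc
    have hcsa : IsSelfAdjoint c := (CFC.sqrt_nonneg (a := a)).isSelfAdjoint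
    have hcc : c * c = a := CFC.sqrt_mul_sqrt_self a ha
    set w := Φ c with hw
    -- tripotent
    have htri : u * star u * u = u := hΦ.tripotent
    set e := star u * u with he
    have hee : e * e = e := by
      have h' : e * e = star u * (u * star u * u) := by rw [he]; noncomm_ring
      rw [h', htri, he]
    -- w = u * star w * u
    have hwmid : w = u * star w * u := by
      have h := hΦ 1 c 1
      rw [tp_one_mid, hcsa.star_eq, tp_sandwich] at h
      exact h
    -- Φ a = w * star u * w
    have hΦa : Φ a = w * star u * w := by
      have h := hΦ c 1 c
      have : tp c 1 c = a := by rw [tp_sandwich]; simp [hcc]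
      rw [this, tp_sandwich] at h
      exact h
    set v := star u * w with hv
    have hv1 : v = e * star v := by
      rw [hv, he]
      calc star u * w = star u * (u * star w * u) := by rw [← hwmid]
        _ = star u * u * (star (star u * w)) := by
              simp only [star_mul, star_star]; noncomm_ring
    have hv2 : star v = v * e := by
      have hw' : star w = star u * w * star u := by
        have := congrArg star hwmid
        simpa [star_mul, star_star, mul_assoc] using this
      rw [hv, he, star_mul, star_star, hw']
      noncomm_ring
    have hvsa : star v = v := by
      have h3 : v = e * v * e := by
        conv_lhs => rw [hv1, hv2]
        noncomm_ring
      calc star v = v * e := hv2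
        _ = (e * v * e) * e := by rw [← h3]
        _ = e * v * (e * e) := by noncomm_ring
        _ = e * v * e := by rw [hee]
        _ = v := h3.symm
    have key : star (T 1) * T a = star v * v := by
      rw [← h1, ← ha', hΦa, hvsa, hv]
      noncomm_ring
    rw [key]
    exact star_mul_self_nonneg v
end
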